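/- For fixed k ≥ 0, the ordinary generating function Σ_{n≥k} U_r(n,k) t^n equals t^k / Π_{j=0}^{k} (1 - (j²+r)t), as an identity of formal power series. -/

import Mathlib

/-- `centralU r n k` is the r-central factorial number with even indices of the second kind. -/
def centralU (r : ℕ) : ℕ → ℕ → ℤ
  | 0, 0 => 1
  | 0, _ + 1 => 0
  | n + 1, 0 => (r : ℤ) ^ (n + 1)
  | n + 1, k + 1 => centralU r n k + (((k : ℤ) + 1) ^ 2 + r) * centralU r n (k + 1)

/-!
Multiplying the series `F_k = ∑ₙ U_r(n,k) tⁿ` by `1 - (k² + r) t` turns the recurrence into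
`F_k (1 - (k² + r) t) = t F_{k-1}` for `k ≥ 1`, and `U_r(n,0) = rⁿ` gives `F_0 (1 - r t) = 1`;
telescoping over `k` yields `F_k ∏_{j ≤ k} (1 - (j² + r) t) = tᵏ`.
-/

open PowerSeries

theorem centralU_zero_right (r n : ℕ) : centralU r n 0 = (r : ℤ) ^ n := by
  cases n <;> rfl

theorem centralU_eq_zero_of_lt (r : ℕ) {n k : ℕ} (h : n < k) : centralU r n k = 0 := by
  induction n generalizing k with
  | zero => obtain ⟨k, rfl⟩ := Nat.exists_eq_add_one.mpr h; rfl
  | succ n ih =>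
    obtain ⟨k, rfl⟩ := Nat.exists_eq_add_one.mpr (Nat.zero_lt_of_lt h)
    simp only [centralU, ih (by omega : n < k), ih (by omega : n < k + 1), mul_zero, add_zero]

section

variable {R : Type*} [CommRing R]

theorem PowerSeries.coeff_succ_mul_one_sub_C_mul_X (f : R⟦X⟧) (c : R) (n : ℕ) :
    coeff (n + 1) (f * (1 - C c * X)) = coeff (n + 1) f - c * coeff n f := by
  rw [mul_sub, mul_one, map_sub, mul_left_comm, coeff_C_mul, coeff_succ_mul_X]

variable (R) in
noncomputable def centralUSeries (r k : ℕ) : R⟦X⟧ :=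
  mk fun n => (centralU r n k : R)

theorem centralUSeries_zero_mul (r : ℕ) :
    centralUSeries R r 0 * (1 - C (r : R) * X) = 1 := by
  ext n
  cases n with
  | zero => simp [centralUSeries, centralU]
  | succ n =>
    simp only [coeff_succ_mul_one_sub_C_mul_X, centralUSeries, coeff_mk, centralU_zero_right,
      coeff_one, Nat.succ_ne_zero, if_false]
    push_cast
    ring

theorem centralUSeries_succ_mul (r k : ℕ) :
    centralUSeries R r (k + 1) * (1 - C (((k + 1 : ℕ) : R) ^ 2 + r) * X) =
      X * centralUSeries R r k := by
  ext n
  cases n with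
  | zero => simp [centralUSeries, centralU]
  | succ n =>
    simp only [coeff_succ_mul_one_sub_C_mul_X, coeff_succ_X_mul, centralUSeries, coeff_mk,
      centralU]
    push_cast
    ring

theorem centralUSeries_mul_prod (r k : ℕ) :
    centralUSeries R r k * ∏ j ∈ Finset.range (k + 1), (1 - C ((j : R) ^ 2 + r) * X) =
      X ^ k := by
  induction k with
  | zero =>
    rw [Finset.prod_range_one, Nat.cast_zero, zero_pow two_ne_zero, zero_add, pow_zero]
    exact centralUSeries_zero_mul r
  | succ k ih =>
    rw [Finset.prod_range_succ, mul_comm (∏ j ∈ _, _), ← mul_assoc, centralUSeries_succ_mul,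
      mul_assoc, ih, pow_succ']

end

open PowerSeries in
theorem centralU_ogf (r k : ℕ) :
    (PowerSeries.mk fun n => if k ≤ n then (centralU r n k : ℚ) else 0) *
        ∏ j ∈ Finset.range (k + 1), (1 - PowerSeries.C ((j : ℚ) ^ 2 + r) * PowerSeries.X) =
      PowerSeries.X ^ k := by
  have hseries : (mk fun n => if k ≤ n then (centralU r n k : ℚ) else 0) =
      centralUSeries ℚ r k := by
    ext n
    by_cases h : k ≤ n
    · simp [centralUSeries, h]
    · simp [centralUSeries, h, centralU_eq_zero_of_lt r (not_le.mp h)]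
  rw [hseries, centralUSeries_mul_prod]
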